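/- arXiv:1711.05790 — 3 statements merged into one kernel-verified Lean document; each statement's English description precedes it below -/
import Mathlib

section
/- Let p1, p2, pR1, pR2 ∈ ℝ² be points such that pR1 is not collinear with p1 and p2, and pR2 is not collinear with p1 and p2 (in particular p1 ≠ p2). Then the 5 × 8 matrix with rows encoding the constraints ⟨p1−p2, u1−u2⟩ = 0, ⟨p1−pR1, u1−uR1⟩ = 0, ⟨p2−pR1, u2−uR1⟩ = 0, ⟨p1−pR2, u1−uR2⟩ = 0, ⟨p2−pR2, u2−uR2⟩ = 0 (acting on (u1,u2,uR1,uR2) ∈ (ℝ²)⁴) has rank 5, and hence its null space has dimension 3. -/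
/-- The row of a rigidity matrix corresponding to the constraint
`⟨a, u i - u j⟩ = 0`, acting on velocities `(u 0, …, u (N-1)) ∈ (ℝ²)^N`:
it has entries `a` in block `i`, `-a` in block `j`, and `0` elsewhere. -/
def constraintRow {N : ℕ} (a : Fin 2 → ℝ) (i j : Fin N) : Fin N × Fin 2 → ℝ :=
  fun q => if q.1 = i then a q.2 else if q.1 = j then -(a q.2) else 0

/-- The 5 × 8 rigidity matrix of Motif 2D2: two rigid components with coordinate
labelings `{p1, p2, pR1}` and `{p1, p2, pR2}`, intersecting at `p1, p2`,
acting on velocities `(u1, u2, uR1, uR2) ∈ (ℝ²)⁴`. -/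
def rigidityMatrix2D2 (p1 p2 pR1 pR2 : Fin 2 → ℝ) : Matrix (Fin 5) (Fin 4 × Fin 2) ℝ :=
  Matrix.of
    ![constraintRow (p1 - p2) 0 1,
      constraintRow (p1 - pR1) 0 2,
      constraintRow (p2 - pR1) 1 2,
      constraintRow (p1 - pR2) 0 3,
      constraintRow (p2 - pR2) 1 3]

lemma not_collinear_indep {a b c : Fin 2 → ℝ}
    (h : ¬ Collinear ℝ ({a, b, c} : Set (Fin 2 → ℝ)))
    {s t : ℝ} (hst : s • (a - c) + t • (b - c) = 0) : s = 0 ∧ t = 0 := by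
  by_cases hs : s = 0
  · subst hs
    refine ⟨rfl, ?_⟩
    by_contra ht
    have hbc : b = c := by
      have h0 : t • (b - c) = 0 := by simpa using hst
      rcases smul_eq_zero.mp h0 with h' | h'
      · exact absurd h' ht
      · exact sub_eq_zero.mp h'
    apply h
    rw [hbc]
    have : ({a, c, c} : Set (Fin 2 → ℝ)) = {a, c} := by simp
    rw [this]
    exact collinear_pair ℝ a c
  · exfalso
    apply h
    have hmem : c ∈ ({a, b, c} : Set (Fin 2 → ℝ)) := by simp
    rw [collinear_iff_of_mem hmem]
    refine ⟨b - c, ?_⟩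
    intro p hp
    have hac : a - c = (-t / s) • (b - c) := by
      have h1 : s • (a - c) = (-t) • (b - c) := by
        rw [neg_smul]; linear_combination (norm := module) hst
      calc a - c = s⁻¹ • (s • (a - c)) := by
            rw [smul_smul, inv_mul_cancel₀ hs, one_smul]
        _ = s⁻¹ • ((-t) • (b - c)) := by rw [h1]
        _ = (-t / s) • (b - c) := by rw [smul_smul]; ring_nf
    rcases hp with hp | hp | hp
    · refine ⟨-t / s, ?_⟩
      rw [hp]
      simp only [vadd_eq_add]
      linear_combination (norm := module) hac
    · exact ⟨1, by rw [hp]; simp⟩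
    · exact ⟨0, by rw [hp]; simp⟩

/-- Motif 2D2: if `pR1` is noncollinear with `p1, p2` and `pR2` is noncollinear
with `p1, p2`, then the 5 × 8 rigidity matrix has rank 5 and null space of
dimension 3. -/
theorem motif2D2_rank (p1 p2 pR1 pR2 : Fin 2 → ℝ)
    (h1 : ¬ Collinear ℝ ({p1, p2, pR1} : Set (Fin 2 → ℝ)))
    (h2 : ¬ Collinear ℝ ({p1, p2, pR2} : Set (Fin 2 → ℝ))) :
    (rigidityMatrix2D2 p1 p2 pR1 pR2).rank = 5 ∧
    Module.finrank ℝ (LinearMap.ker (rigidityMatrix2D2 p1 p2 pR1 pR2).mulVecLin) = 3 := by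
  have hne : p1 ≠ p2 := by
    intro h
    apply h1
    rw [h]
    have : ({p2, p2, pR1} : Set (Fin 2 → ℝ)) = {p2, pR1} := by simp
    rw [this]
    exact collinear_pair ℝ p2 pR1
  set M := rigidityMatrix2D2 p1 p2 pR1 pR2 with hM
  have hker : LinearMap.ker (M.transpose.mulVecLin) = ⊥ := by
    rw [LinearMap.ker_eq_bot']
    intro c hc
    have key : ∀ q, (∑ j : Fin 5, M j q * c j) = 0 := by
      intro q
      have := congrFun hc q
      simpa [Matrix.mulVecLin, Matrix.mulVec, dotProduct, Matrix.transpose] using this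
    have h20 := key (2, 0)
    have h21 := key (2, 1)
    have h30 := key (3, 0)
    have h31 := key (3, 1)
    simp [hM, rigidityMatrix2D2, constraintRow, Fin.sum_univ_five, Pi.sub_apply, Matrix.vecHead, Matrix.vecTail] at h20 h21 h30 h31
    have e1 : c 1 • (p1 - pR1) + c 2 • (p2 - pR1) = 0 := by
      funext x
      fin_cases x <;> simp [Pi.sub_apply] <;> linarith
    have e2 : c 3 • (p1 - pR2) + c 4 • (p2 - pR2) = 0 := by
      funext x
      fin_cases x <;> simp [Pi.sub_apply] <;> linarith
    obtain ⟨hc1, hc2⟩ := not_collinear_indep h1 e1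
    obtain ⟨hc3, hc4⟩ := not_collinear_indep h2 e2
    have h00 := key (0, 0)
    have h01 := key (0, 1)
    simp [hM, rigidityMatrix2D2, constraintRow, Fin.sum_univ_five, Pi.sub_apply,
      hc1, hc2, hc3, hc4] at h00 h01
    have hc0 : c 0 = 0 := by
      obtain ⟨x, hx⟩ := Function.ne_iff.mp hne
      fin_cases x
      · rcases h00 with h | h
        · exact absurd (sub_eq_zero.mp h) hx
        · exact h
      · rcases h01 with h | h
        · exact absurd (sub_eq_zero.mp h) hx
        · exact h
    funext i
    fin_cases i <;> simp [hc0, hc1, hc2, hc3, hc4]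
  have hinj : Function.Injective M.transpose.mulVecLin := LinearMap.ker_eq_bot.mp hker
  have hrank : M.rank = 5 := by
    rw [← Matrix.rank_transpose M]
    rw [Matrix.rank, LinearMap.finrank_range_of_inj hinj]
    simp
  refine ⟨hrank, ?_⟩
  have hrn := LinearMap.finrank_range_add_finrank_ker M.mulVecLin
  rw [← Matrix.rank, hrank] at hrn
  have h8 : Module.finrank ℝ (Fin 4 × Fin 2 → ℝ) = 8 := by simp
  rw [h8] at hrn
  omega
end

section
/- Let p1, p2 ∈ ℝ² be distinct points and pR2 ∈ ℝ² be noncollinear with p1 and p2. Then the 3 × 6 matrix with rows encoding ⟨p1−p2, u1−u2⟩ = 0, ⟨p1−pR2, u1−uR2⟩ = 0, ⟨p2−pR2, u2−uR2⟩ = 0 on (u1,u2,uR2) ∈ (ℝ²)³ has rank 3, so its null space has dimension 3. -/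
/-- The 3 × 6 rigidity matrix of the single-rod case of Motif 2D2, with rows
encoding `⟨p1−p2, u1−u2⟩ = 0`, `⟨p1−pR2, u1−uR2⟩ = 0`, `⟨p2−pR2, u2−uR2⟩ = 0`
on `(u1, u2, uR2) ∈ (ℝ²)³`. -/
def rigidityMatrixRod (p1 p2 pR2 : Fin 2 → ℝ) : Matrix (Fin 3) (Fin 3 × Fin 2) ℝ :=
  Matrix.of
    ![constraintRow (p1 - p2) 0 1,
      constraintRow (p1 - pR2) 0 2,
      constraintRow (p2 - pR2) 1 2]

/-- Noncollinearity gives a nonzero cross product of the edge directions. -/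
lemma cross_ne (p1 p2 pR2 : Fin 2 → ℝ) (hne : p1 ≠ p2)
    (h : ¬ Collinear ℝ ({p1, p2, pR2} : Set (Fin 2 → ℝ))) :
    (p1 - p2) 0 * (p1 - pR2) 1 - (p1 - p2) 1 * (p1 - pR2) 0 ≠ 0 := by
  intro hc
  apply h
  set d1 := p1 - p2 with hd1
  set d2 := p1 - pR2 with hd2
  have hd1ne : d1 ≠ 0 := sub_ne_zero.mpr hne
  have : ∃ c : ℝ, d2 = c • d1 := by
    rcases (by
      by_contra hcon
      push_neg at hcon
      apply hd1ne
      funext k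
      fin_cases k <;> simp [hcon.1, hcon.2] : d1 0 ≠ 0 ∨ d1 1 ≠ 0) with h0 | h1
    · refine ⟨d2 0 / d1 0, funext fun k => ?_⟩
      fin_cases k <;> simp [Pi.smul_apply] <;> field_simp <;> nlinarith [hc]
    · refine ⟨d2 1 / d1 1, funext fun k => ?_⟩
      fin_cases k <;> simp [Pi.smul_apply] <;> field_simp <;> nlinarith [hc]
  obtain ⟨c, hcs⟩ := this
  rw [collinear_iff_of_mem (Set.mem_insert p1 _)]
  refine ⟨d1, ?_⟩
  intro p hp
  rcases hp with rfl | rfl | h3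
  · exact ⟨0, by simp⟩
  · refine ⟨-1, ?_⟩
    rw [hd1, vadd_eq_add]; module
  · subst h3
    refine ⟨-c, ?_⟩
    have key : c • d1 = p1 - p := hcs.symm.trans hd2
    rw [vadd_eq_add, neg_smul, key]; abel

/-- If `p1 ≠ p2` and `pR2` is noncollinear with `p1, p2`, the 3 × 6 rigidity
matrix has rank 3, so its null space has dimension 3. -/
theorem motif2D2_rod_rank (p1 p2 pR2 : Fin 2 → ℝ) (hne : p1 ≠ p2)
    (h : ¬ Collinear ℝ ({p1, p2, pR2} : Set (Fin 2 → ℝ))) :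
    (rigidityMatrixRod p1 p2 pR2).rank = 3 ∧
    Module.finrank ℝ (LinearMap.ker (rigidityMatrixRod p1 p2 pR2).mulVecLin) = 3 := by
  set M := rigidityMatrixRod p1 p2 pR2 with hM
  have hcross := cross_ne p1 p2 pR2 hne h
  have hne23 : p2 ≠ pR2 := by
    rintro rfl
    exact h (by simpa [Set.insert_comm, Set.pair_comm, Set.insert_idem] using
      collinear_pair ℝ p1 p2)
  have hd3 : ∃ k : Fin 2, (p2 - pR2) k ≠ 0 := by
    by_contra hcon
    push_neg at hcon
    apply hne23
    funext k
    have := hcon k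
    simpa [sub_eq_zero] using this
  obtain ⟨k, hk⟩ := hd3
  set e : Fin 3 → Fin 3 × Fin 2 := ![(0,0),(0,1),(2,k)] with he
  set S : Matrix (Fin 3) (Fin 3) ℝ := M.submatrix id e with hS
  have hdet : S.det ≠ 0 := by
    have hcomp : S.det = -((p2 - pR2) k) *
        ((p1 - p2) 0 * (p1 - pR2) 1 - (p1 - p2) 1 * (p1 - pR2) 0) := by
      simp [hS, hM, he, Matrix.det_fin_three, rigidityMatrixRod, constraintRow,
        Fin.ext_iff]
      ring
    rw [hcomp]
    exact mul_ne_zero (neg_ne_zero.mpr hk) hcross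
  have hrankS : S.rank = 3 := by
    rw [Matrix.rank_of_isUnit S
      ((Matrix.isUnit_iff_isUnit_det _).mpr (isUnit_iff_ne_zero.mpr hdet))]
    simp
  set P : Matrix (Fin 3 × Fin 2) (Fin 3) ℝ :=
    Matrix.of fun q j => if e j = q then 1 else 0 with hP
  have hMP : M * P = S := by
    ext i j
    simp [Matrix.mul_apply, hP, mul_ite, hS]
  have hle1 : S.rank ≤ M.rank := by
    rw [← hMP]; exact Matrix.rank_mul_le_left M P
  have hle2 : M.rank ≤ 3 := by
    simpa using M.rank_le_card_height
  rw [hrankS] at hle1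
  have hrankM : M.rank = 3 := le_antisymm hle2 hle1
  refine ⟨hrankM, ?_⟩
  have hrn := LinearMap.finrank_range_add_finrank_ker M.mulVecLin
  rw [Module.finrank_fintype_fun_eq_card] at hrn
  have : M.rank = Module.finrank ℝ (LinearMap.range M.mulVecLin) := rfl
  rw [← this, hrankM] at hrn
  simp at hrn
  omega
end

section
/- If a graph G contains a 3-clique community — a union of triangles T₁, …, T_k such that consecutive triangles T_i, T_{i+1} share an edge (two vertices) — then repeatedly applying the 3-component compression rule (merging the three vertices of any triangle into one vertex) followed by the 2-component rule (merging two vertices joined by a multi-edge of multiplicity ≥ 2) to the triangles in order reduces the vertex set of the community to a single vertex. -/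
/-- Merge all the equivalence classes of `r` meeting `S` into a single class. -/
def mergeClasses {V : Type*} (r : Setoid V) (S : Set V) : Setoid V where
  r x y := r.r x y ∨ ((∃ s ∈ S, r.r x s) ∧ (∃ s ∈ S, r.r y s))
  iseqv := by
    refine ⟨fun x => Or.inl (r.iseqv.refl x), ?_, ?_⟩
    · rintro x y (h | ⟨hx, hy⟩)
      · exact Or.inl (r.iseqv.symm h)
      · exact Or.inr ⟨hy, hx⟩
    · rintro x y z hxy hyz
      rcases hxy with hxy | ⟨hx, hy⟩
      · rcases hyz with hyz | ⟨⟨s, hs, hys⟩, hz⟩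
        · exact Or.inl (r.iseqv.trans hxy hyz)
        · exact Or.inr ⟨⟨s, hs, r.iseqv.trans hxy hys⟩, hz⟩
      · rcases hyz with hyz | ⟨hy', hz⟩
        · obtain ⟨s, hs, hys⟩ := hy
          exact Or.inr ⟨hx, ⟨s, hs, r.iseqv.trans (r.iseqv.symm hyz) hys⟩⟩
        · exact Or.inr ⟨hx, hz⟩

/-- One step of rigid graph compression of the graph `G`, acting on a partition
(setoid) of the vertices into rigid components.
`merge2` is the 2-component rule: merge two components joined by at least two
distinct edges of `G` (a multi-edge of multiplicity ≥ 2 after contraction).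
`merge3` is the 3-component rule: merge the three components of a triangle,
i.e. three components pairwise joined by edges of `G`. -/
inductive CompressStep {V : Type*} (G : SimpleGraph V) : Setoid V → Setoid V → Prop
  | merge2 (r : Setoid V) (a b : V) (hab : ¬ r.r a b)
      (e₁ e₂ : Sym2 V) (he₁ : e₁ ∈ G.edgeSet) (he₂ : e₂ ∈ G.edgeSet) (hne : e₁ ≠ e₂)
      (h₁ : ∃ x ∈ e₁, ∃ y ∈ e₁, r.r x a ∧ r.r y b)
      (h₂ : ∃ x ∈ e₂, ∃ y ∈ e₂, r.r x a ∧ r.r y b) :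
      CompressStep G r (mergeClasses r {a, b})
  | merge3 (r : Setoid V) (a b c : V)
      (hab : ¬ r.r a b) (hac : ¬ r.r a c) (hbc : ¬ r.r b c)
      (eab : ∃ x y, r.r x a ∧ r.r y b ∧ G.Adj x y)
      (eac : ∃ x y, r.r x a ∧ r.r y c ∧ G.Adj x y)
      (ebc : ∃ x y, r.r x b ∧ r.r y c ∧ G.Adj x y) :
      CompressStep G r (mergeClasses r {a, b, c})

/-- If `G` contains a 3-clique community — triangles `T 0, …, T (k-1)` with
consecutive triangles sharing an edge (two vertices) — then iterated rigid
graph compression (the 3-component and 2-component rules), starting from the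
discrete partition, merges all vertices of the community into a single
component. -/
theorem compress_three_clique_community {V : Type*} [DecidableEq V] (G : SimpleGraph V)
    (k : ℕ) (hk : 1 ≤ k) (T : ℕ → Finset V)
    (hcard : ∀ i < k, (T i).card = 3)
    (htri : ∀ i < k, ∀ a ∈ T i, ∀ b ∈ T i, a ≠ b → G.Adj a b)
    (hshare : ∀ i, i + 1 < k → (T i ∩ T (i + 1)).card = 2) :
    ∃ r : Setoid V, Relation.ReflTransGen (CompressStep G) ⊥ r ∧
      ∀ x ∈ ⋃ i ∈ Finset.range k, (T i : Set V),
        ∀ y ∈ ⋃ i ∈ Finset.range k, (T i : Set V), r.r x y := by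
  -- Main induction: after processing triangles `0 … i`, all their vertices are merged.
  suffices h : ∀ i, i < k → ∃ r : Setoid V, Relation.ReflTransGen (CompressStep G) ⊥ r ∧
      ∀ x ∈ ⋃ j ∈ Finset.range (i + 1), (T j : Set V),
        ∀ y ∈ ⋃ j ∈ Finset.range (i + 1), (T j : Set V), r.r x y by
    obtain ⟨r, hr, hall⟩ := h (k - 1) (by omega)
    have hk1 : k - 1 + 1 = k := by omega
    rw [hk1] at hall
    exact ⟨r, hr, hall⟩
  intro i
  induction i with
  | zero =>
    intro h0
    obtain ⟨a, b, c, hab, hac, hbc, hT⟩ := Finset.card_eq_three.mp (hcard 0 h0)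
    have hmem : ∀ x ∈ T 0, x = a ∨ x = b ∨ x = c := by
      intro x hx
      rw [hT] at hx
      simpa using hx
    have ha : a ∈ T 0 := by rw [hT]; simp
    have hb : b ∈ T 0 := by rw [hT]; simp
    have hc : c ∈ T 0 := by rw [hT]; simp
    refine ⟨mergeClasses ⊥ {a, b, c}, Relation.ReflTransGen.single ?_, ?_⟩
    · exact CompressStep.merge3 ⊥ a b c hab hac hbc
        ⟨a, b, rfl, rfl, htri 0 h0 a ha b hb hab⟩
        ⟨a, c, rfl, rfl, htri 0 h0 a ha c hc hac⟩
        ⟨b, c, rfl, rfl, htri 0 h0 b hb c hc hbc⟩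
    · intro x hx y hy
      simp only [Set.mem_iUnion, Finset.mem_range, Finset.mem_coe] at hx hy
      obtain ⟨j, hj, hx⟩ := hx
      obtain ⟨j', hj', hy⟩ := hy
      interval_cases j
      interval_cases j'
      have hx' : x ∈ ({a, b, c} : Set V) := by
        rcases hmem x hx with h | h | h <;> simp [h]
      have hy' : y ∈ ({a, b, c} : Set V) := by
        rcases hmem y hy with h | h | h <;> simp [h]
      exact Or.inr ⟨⟨x, hx', rfl⟩, ⟨y, hy', rfl⟩⟩
  | succ i ih =>
    intro hik
    obtain ⟨r, hr, hall⟩ := ih (by omega)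
    -- shared edge between `T i` and `T (i+1)`
    obtain ⟨u, v, huv, hUV⟩ := Finset.card_eq_two.mp (hshare i hik)
    have hu_old : u ∈ T i := by
      have : u ∈ T i ∩ T (i + 1) := by rw [hUV]; simp
      exact (Finset.mem_inter.mp this).1
    have hv_old : v ∈ T i := by
      have : v ∈ T i ∩ T (i + 1) := by rw [hUV]; simp
      exact (Finset.mem_inter.mp this).1
    have hu_new : u ∈ T (i + 1) := by
      have : u ∈ T i ∩ T (i + 1) := by rw [hUV]; simp
      exact (Finset.mem_inter.mp this).2
    have hv_new : v ∈ T (i + 1) := by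
      have : v ∈ T i ∩ T (i + 1) := by rw [hUV]; simp
      exact (Finset.mem_inter.mp this).2
    -- everything in the old union is related to `u`
    have hmemS : ∀ j, j < i + 1 → ∀ x ∈ T j, x ∈ ⋃ j ∈ Finset.range (i + 1), (T j : Set V) := by
      intro j hj x hx
      simp only [Set.mem_iUnion, Finset.mem_range, Finset.mem_coe]
      exact ⟨j, hj, hx⟩
    have huS : u ∈ ⋃ j ∈ Finset.range (i + 1), (T j : Set V) := hmemS i (by omega) u hu_old
    have hvS : v ∈ ⋃ j ∈ Finset.range (i + 1), (T j : Set V) := hmemS i (by omega) v hv_old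
    -- third vertex of `T (i+1)`
    have hsub : ({u, v} : Finset V) ⊆ T (i + 1) := by
      intro x hx
      rcases Finset.mem_insert.mp hx with h | h
      · exact h ▸ hu_new
      · exact (Finset.mem_singleton.mp h) ▸ hv_new
    have hcard2 : ({u, v} : Finset V).card = 2 := by
      rw [Finset.card_insert_of_notMem (by simpa using huv), Finset.card_singleton]
    obtain ⟨w, hw_new, hw_notin⟩ : ∃ w ∈ T (i + 1), w ∉ ({u, v} : Finset V) := by
      by_contra hcon
      push_neg at hcon
      have : T (i + 1) ⊆ ({u, v} : Finset V) := hcon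
      have := Finset.card_le_card this
      rw [hcard (i + 1) hik, hcard2] at this
      omega
    have hwu : w ≠ u := by intro h; exact hw_notin (by simp [h])
    have hwv : w ≠ v := by intro h; exact hw_notin (by simp [h])
    have hTnew : ∀ x ∈ T (i + 1), x = u ∨ x = v ∨ x = w := by
      intro x hx
      have hsub3 : ({u, v, w} : Finset V) ⊆ T (i + 1) := by
        intro y hy
        rcases Finset.mem_insert.mp hy with h | h
        · exact h ▸ hu_new
        rcases Finset.mem_insert.mp h with h | h
        · exact h ▸ hv_new
        · exact (Finset.mem_singleton.mp h) ▸ hw_new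
      have hc3 : ({u, v, w} : Finset V).card = 3 := by
        rw [Finset.card_insert_of_notMem, Finset.card_insert_of_notMem]
        · simp
        · simpa using hwv.symm
        · simp only [Finset.mem_insert, Finset.mem_singleton]
          push_neg
          exact ⟨huv, hwu.symm⟩
      have heq : T (i + 1) = ({u, v, w} : Finset V) :=
        (Finset.eq_of_subset_of_card_le hsub3 (by rw [hcard (i + 1) hik, hc3])).symm
      rw [heq] at hx
      simpa using hx
    by_cases hcase : r.r w u
    · -- already merged, same setoid works
      refine ⟨r, hr, ?_⟩
      have key : ∀ x ∈ ⋃ j ∈ Finset.range (i + 2), (T j : Set V), r.r x u := by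
        intro x hx
        simp only [Set.mem_iUnion, Finset.mem_range, Finset.mem_coe] at hx
        obtain ⟨j, hj, hx⟩ := hx
        rcases Nat.lt_succ_iff_lt_or_eq.mp hj with hj | hj
        · exact hall x (hmemS j hj x hx) u huS
        · subst hj
          rcases hTnew x hx with h | h | h
          · exact h ▸ r.iseqv.refl u
          · exact h ▸ hall v hvS u huS
          · exact h ▸ hcase
      intro x hx y hy
      exact r.iseqv.trans (key x hx) (r.iseqv.symm (key y hy))
    · -- apply the 2-component rule merging the classes of `w` and `u`
      have hadj_wu : G.Adj w u := htri (i + 1) hik w hw_new u hu_new hwu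
      have hadj_wv : G.Adj w v := htri (i + 1) hik w hw_new v hv_new hwv
      have hrvu : r.r v u := hall v hvS u huS
      refine ⟨mergeClasses r {w, u}, Relation.ReflTransGen.tail hr ?_, ?_⟩
      · refine CompressStep.merge2 r w u hcase s(w, u) s(w, v)
          hadj_wu hadj_wv ?_ ?_ ?_
        · intro h
          rw [Sym2.eq_iff] at h
          rcases h with ⟨-, h⟩ | ⟨h, -⟩
          · exact huv h
          · exact hwv h
        · exact ⟨w, by simp, u, by simp, r.iseqv.refl w, r.iseqv.refl u⟩
        · exact ⟨w, by simp, v, by simp, r.iseqv.refl w, hrvu⟩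
      · have key : ∀ x ∈ ⋃ j ∈ Finset.range (i + 2), (T j : Set V),
            ∃ s ∈ ({w, u} : Set V), r.r x s := by
          intro x hx
          simp only [Set.mem_iUnion, Finset.mem_range, Finset.mem_coe] at hx
          obtain ⟨j, hj, hx⟩ := hx
          rcases Nat.lt_succ_iff_lt_or_eq.mp hj with hj | hj
          · exact ⟨u, by simp, hall x (hmemS j hj x hx) u huS⟩
          · subst hj
            rcases hTnew x hx with h | h | h
            · exact ⟨u, by simp, h ▸ r.iseqv.refl u⟩
            · exact ⟨u, by simp, h ▸ hrvu⟩
            · exact ⟨w, by simp, h ▸ r.iseqv.refl w⟩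
        intro x hx y hy
        exact Or.inr ⟨key x hx, key y hy⟩
end
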